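/- arXiv:0706.3295 — 2 statements merged into one kernel-verified Lean document; each statement's English description precedes it below -/
import Mathlib

section
/- If n is an odd positive integer and i is an integer with 2 ≤ i ≤ (n−1)/2, then |K^n_i((n+1)/2)| < C(n, ⌊i/2⌋). -/
open Finset

def kraw (n k i : ℕ) : ℤ :=
  ∑ j ∈ Finset.range (k + 1), (-1) ^ j * (i.choose j) * ((n - i).choose (k - j))

open Polynomial

lemma coeff_one_sub_X_pow (k j : ℕ) : ((1 - X : ℤ[X])^k).coeff j = (-1)^j * k.choose j := by
  have h : (1 - X : ℤ[X]) = C (-1) * (X + C (-1)) := by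
    simp [mul_add, ← C_mul]; ring
  rw [h, mul_pow, ← C_pow, coeff_C_mul, coeff_X_add_C_pow]
  rcases le_or_gt j k with hj | hj
  · have h2 : k + (k - j) = 2 * (k - j) + j := by omega
    rw [← mul_assoc, ← pow_add, h2, pow_add, pow_mul]
    simp
  · simp [Nat.choose_eq_zero_of_lt hj]

lemma coeff_one_sub_X_sq_pow (m i : ℕ) :
    ((1 - X^2 : ℤ[X])^m).coeff i
      = if Even i then (-1)^(i/2) * ((m.choose (i/2) : ℤ)) else 0 := by
  have h : ((1 : ℤ[X]) - X^2)^m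
      = ∑ k ∈ range (m+1), C ((-1)^k * (m.choose k : ℤ)) * X^(2*k) := by
    rw [sub_eq_add_neg, add_comm, add_pow]
    refine Finset.sum_congr rfl fun k hk => ?_
    rw [neg_pow, one_pow, mul_one, ← pow_mul, map_mul, map_pow, map_neg, map_one,
      mul_comm 2 k]
    push_cast [C_eq_natCast]
    ring
  rw [h, finset_sum_coeff]
  simp only [coeff_C_mul, coeff_X_pow]
  rcases Nat.even_or_odd i with he | hodd
  · rw [if_pos he]
    obtain ⟨t, ht⟩ := he
    have hti : i / 2 = t := by omega
    rw [Finset.sum_eq_single t]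
    · rcases le_or_gt t m with htm | htm
      · rw [if_pos (by omega), hti]
        ring
      · simp [Nat.choose_eq_zero_of_lt htm, hti]
    · intro b _ hb
      have : ¬ (i = 2 * b) := by omega
      simp [this]
    · intro htmem
      have htm : m < t := by simpa [Finset.mem_range] using htmem
      simp [hti, Nat.choose_eq_zero_of_lt htm]
  · rw [if_neg (by simpa [Nat.not_even_iff_odd] using hodd)]
    refine Finset.sum_eq_zero fun k _ => ?_
    have : ¬ (i = 2 * k) := by rcases hodd with ⟨t, ht⟩; omega
    simp [this]

theorem stmt_15' (n i : ℕ) (hn : 0 < n) (ho : Odd n) (hi1 : 2 ≤ i) (hi2 : i ≤ (n - 1) / 2) :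
    |(∑ j ∈ Finset.range (i + 1), (-1) ^ j * (((n+1)/2).choose j : ℤ) * ((n - (n+1)/2).choose (i - j))
      : ℤ)| < (n.choose (i / 2) : ℤ) := by
  obtain ⟨m, hm⟩ := ho
  have hx : (n + 1) / 2 = m + 1 := by omega
  have hnx : n - (n + 1) / 2 = m := by omega
  have him : i ≤ m := by omega
  -- the sum equals a polynomial coefficient
  have hk : (∑ j ∈ Finset.range (i + 1),
        (-1) ^ j * (((n+1)/2).choose j : ℤ) * ((n - (n+1)/2).choose (i - j)))
      = ((1 - X : ℤ[X])^(m+1) * (1 + X)^m).coeff i := by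
    have hnx' : n - (m + 1) = m := by omega
    rw [coeff_mul, Finset.Nat.sum_antidiagonal_eq_sum_range_succ_mk]
    refine Finset.sum_congr rfl fun j hj => ?_
    simp only [coeff_one_sub_X_pow, coeff_one_add_X_pow, hx, hnx', mul_assoc]
  have hfac : (1 - X : ℤ[X])^(m+1) * (1 + X)^m
      = (1 - X^2)^m - X * (1 - X^2)^m := by
    have h1 : ((1:ℤ[X]) - X) * (1 + X) = 1 - X^2 := by ring
    have h2 : (1 - X : ℤ[X])^(m+1) * (1 + X)^m = (1 - X) * ((1 - X) * (1 + X))^m := by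
      rw [mul_pow]; ring
    rw [h2, h1]; ring
  obtain ⟨t, rfl⟩ : ∃ t, i = t + 1 := ⟨i - 1, by omega⟩
  rw [hk, hfac, coeff_sub, coeff_X_mul, coeff_one_sub_X_sq_pow, coeff_one_sub_X_sq_pow]
  have habs : |(if Even (t+1) then (-1)^((t+1)/2) * ((m.choose ((t+1)/2) : ℤ)) else 0)
      - (if Even t then (-1)^(t/2) * ((m.choose (t/2) : ℤ)) else 0)|
      = (m.choose ((t+1)/2) : ℤ) := by
    rcases Nat.even_or_odd t with he | hodd
    · have h1 : ¬ Even (t+1) := by simp [Nat.even_add_one, he]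
      have h2 : t / 2 = (t+1)/2 := by obtain ⟨s, hs⟩ := he; omega
      rw [if_neg h1, if_pos he, zero_sub, abs_neg, abs_mul, abs_pow, abs_neg, abs_one,
        one_pow, one_mul, h2, Int.abs_natCast]
    · have h1 : Even (t+1) := by simp [Nat.even_add_one, Nat.not_even_iff_odd, hodd]
      have h2 : ¬ Even t := by simp [Nat.not_even_iff_odd, hodd]
      rw [if_pos h1, if_neg h2, sub_zero, abs_mul, abs_pow, abs_neg, abs_one,
        one_pow, one_mul, Int.abs_natCast]
  rw [habs]
  have ht2 : 1 ≤ (t+1)/2 := by omega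
  obtain ⟨s, hs⟩ : ∃ s, (t+1)/2 = s + 1 := ⟨(t+1)/2 - 1, by omega⟩
  have hsm : s + 1 ≤ m := by omega
  have h3 : m.choose ((t+1)/2) < n.choose ((t+1)/2) := by
    calc m.choose ((t+1)/2) < (m+1).choose ((t+1)/2) := by
          have key : (m+1).choose (s+1) = m.choose s + m.choose (s+1) :=
            Nat.choose_succ_succ m s
          have h0 : 0 < m.choose s := Nat.choose_pos (by omega)
          rw [hs]
          omega
      _ ≤ n.choose ((t+1)/2) := Nat.choose_le_choose _ (by omega)
  exact_mod_cast h3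

theorem stmt_15 (n i : ℕ) (hn : 0 < n) (ho : Odd n) (hi1 : 2 ≤ i) (hi2 : i ≤ (n - 1) / 2) :
    |kraw n i ((n + 1) / 2)| < (n.choose (i / 2) : ℤ) := by
  unfold kraw
  exact stmt_15' n i hn ho hi1 hi2
end

section
/- Let n be an odd integer. For every integer i with 7 ≤ i ≤ (n−1)/2, one has (i−4)·C(n,i) / C(n, ⌊i/2⌋) > 2n(n−2)/(n+1). -/
private lemma choose_mono_right_aux {n a b : ℕ} (hab : a ≤ b) (hb : b ≤ n / 2) :
    n.choose a ≤ n.choose b := by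
  induction b with
  | zero => interval_cases a; rfl
  | succ b ih =>
    rcases Nat.lt_or_ge a (b + 1) with h | h
    · exact le_trans (ih (by omega) (by omega))
        (Nat.choose_le_succ_of_lt_half_left (by omega))
    · have : a = b + 1 := by omega
      subst this; rfl

private lemma polyB_aux (u v : ℕ) :
    2 * (15 + u) * (13 + u) * ((3 + 1) * (3 + 2) * (3 + 3) * (3 + 4)) <
      (3 + v) * (16 + u) * ((12 + u) * (11 + u) * (10 + u) * (9 + u)) := by
  have h : (3 + v) * (16 + u) * ((12 + u) * (11 + u) * (10 + u) * (9 + u)) =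
      2 * (15 + u) * (13 + u) * ((3 + 1) * (3 + 2) * (3 + 3) * (3 + 4)) +
      (242640 + 208344 * u + 43686 * u ^ 2 + 3993 * u ^ 3 + 174 * u ^ 4 + 3 * u ^ 5
        + v * (16 + u) * ((12 + u) * (11 + u) * (10 + u) * (9 + u))) := by ring
  rw [h]
  exact Nat.lt_add_of_pos_right (by positivity)

private lemma polyA_aux (s t v : ℕ) :
    2 * (17 + 4 * s + t) * (15 + 4 * s + t) * ((5 + s) * (6 + s) * (7 + s) * (8 + s)) <
      (4 + 2 * s + v) * (18 + 4 * s + t) *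
        ((13 + 3 * s + t) * (12 + 3 * s + t) * (11 + 3 * s + t) * (10 + 3 * s + t)) := by
  have h : (4 + 2 * s + v) * (18 + 4 * s + t) *
        ((13 + 3 * s + t) * (12 + 3 * s + t) * (11 + 3 * s + t) * (10 + 3 * s + t)) =
      2 * (17 + 4 * s + t) * (15 + 4 * s + t) * ((5 + s) * (6 + s) * (7 + s) * (8 + s)) +
      (378720 + 394992 * t + 77696 * t ^ 2 + 6476 * t ^ 3 + 256 * t ^ 4 + 4 * t ^ 5
        + 1220196 * s + 666592 * s * t + 99844 * s * t ^ 2 + 6494 * s * t ^ 3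
        + 192 * s * t ^ 4 + 2 * s * t ^ 5 + 1135238 * s ^ 2 + 415936 * s ^ 2 * t
        + 45702 * s ^ 2 * t ^ 2 + 2036 * s ^ 2 * t ^ 3 + 32 * s ^ 2 * t ^ 4
        + 492608 * s ^ 3 + 123854 * s ^ 3 * t + 8984 * s ^ 3 * t ^ 2 + 204 * s ^ 3 * t ^ 3
        + 112170 * s ^ 4 + 17880 * s ^ 4 * t + 646 * s ^ 4 * t ^ 2
        + 13060 * s ^ 5 + 1010 * s ^ 5 * t + 616 * s ^ 6
        + v * (18 + 4 * s + t) *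
          ((13 + 3 * s + t) * (12 + 3 * s + t) * (11 + 3 * s + t) * (10 + 3 * s + t))) := by
    ring
  rw [h]
  exact Nat.lt_add_of_pos_right (by positivity)

private lemma nat_main_aux (n i : ℕ) (hi1 : 7 ≤ i) (hn : 2 * i + 1 ≤ n) :
    2 * n * (n - 2) * n.choose (i / 2) < (i - 4) * (n + 1) * n.choose i := by
  set j := i / 2 with hj
  have hji : j + 4 ≤ i := by omega
  have hjn : j + 4 ≤ n := by omega
  -- exact telescoping
  have e1 : n.choose (j + 1) * (j + 1) = n.choose j * (n - j) :=
    Nat.choose_succ_right_eq n j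
  have e2 : n.choose (j + 2) * (j + 2) = n.choose (j + 1) * (n - (j + 1)) :=
    Nat.choose_succ_right_eq n (j + 1)
  have e3 : n.choose (j + 3) * (j + 3) = n.choose (j + 2) * (n - (j + 2)) :=
    Nat.choose_succ_right_eq n (j + 2)
  have e4 : n.choose (j + 4) * (j + 4) = n.choose (j + 3) * (n - (j + 3)) :=
    Nat.choose_succ_right_eq n (j + 3)
  have tele : n.choose (j + 4) * ((j + 1) * (j + 2) * (j + 3) * (j + 4)) =
      n.choose j * ((n - j) * (n - (j + 1)) * (n - (j + 2)) * (n - (j + 3))) := by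
    calc n.choose (j + 4) * ((j + 1) * (j + 2) * (j + 3) * (j + 4))
        = n.choose (j + 4) * (j + 4) * ((j + 1) * (j + 2) * (j + 3)) := by ring
      _ = n.choose (j + 3) * (j + 3) * ((j + 1) * (j + 2)) * (n - (j + 3)) := by
          rw [e4]; ring
      _ = n.choose (j + 2) * (j + 2) * (j + 1) * ((n - (j + 2)) * (n - (j + 3))) := by
          rw [e3]; ring
      _ = n.choose (j + 1) * (j + 1) * ((n - (j + 1)) * (n - (j + 2)) * (n - (j + 3))) := by
          rw [e2]; ring
      _ = n.choose j * ((n - j) * (n - (j + 1)) * (n - (j + 2)) * (n - (j + 3))) := by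
          rw [e1]; ring
  have mono : n.choose (j + 4) ≤ n.choose i :=
    choose_mono_right_aux hji (by omega)
  have hpoly : 2 * n * (n - 2) * ((j + 1) * (j + 2) * (j + 3) * (j + 4)) <
      (i - 4) * (n + 1) * ((n - j) * (n - (j + 1)) * (n - (j + 2)) * (n - (j + 3))) := by
    rcases Nat.lt_or_ge j 4 with h4 | h4
    · -- j = 3
      have hj' : j = 3 := by omega
      obtain ⟨u, hu⟩ : ∃ u, n = 15 + u := ⟨n - 15, by omega⟩
      obtain ⟨v, hv⟩ : ∃ v, i - 4 = 3 + v := ⟨i - 7, by omega⟩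
      rw [hj', hu, hv,
        show 15 + u - 2 = 13 + u from by omega,
        show 15 + u + 1 = 16 + u from by omega,
        show 15 + u - 3 = 12 + u from by omega,
        show 15 + u - (3 + 1) = 11 + u from by omega,
        show 15 + u - (3 + 2) = 10 + u from by omega,
        show 15 + u - (3 + 3) = 9 + u from by omega]
      exact polyB_aux u v
    · -- j ≥ 4
      obtain ⟨s, hs⟩ : ∃ s, j = 4 + s := ⟨j - 4, by omega⟩
      obtain ⟨t, ht⟩ : ∃ t, n = 17 + 4 * s + t := ⟨n - (17 + 4 * s), by omega⟩
      obtain ⟨v, hv⟩ : ∃ v, i - 4 = 4 + 2 * s + v := ⟨i - 4 - (4 + 2 * s), by omega⟩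
      rw [hs, ht, hv,
        show 17 + 4 * s + t - 2 = 15 + 4 * s + t from by omega,
        show 4 + s + 1 = 5 + s from by omega,
        show 4 + s + 2 = 6 + s from by omega,
        show 4 + s + 3 = 7 + s from by omega,
        show 4 + s + 4 = 8 + s from by omega,
        show 17 + 4 * s + t + 1 = 18 + 4 * s + t from by omega,
        show 17 + 4 * s + t - (4 + s) = 13 + 3 * s + t from by omega,
        show 17 + 4 * s + t - (5 + s) = 12 + 3 * s + t from by omega,
        show 17 + 4 * s + t - (6 + s) = 11 + 3 * s + t from by omega,
        show 17 + 4 * s + t - (7 + s) = 10 + 3 * s + t from by omega]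
      exact polyA_aux s t v
  have hcpos : 0 < n.choose (j + 4) := Nat.choose_pos hjn
  have hQpos : 0 < (n - j) * (n - (j + 1)) * (n - (j + 2)) * (n - (j + 3)) := by
    refine Nat.mul_pos (Nat.mul_pos (Nat.mul_pos ?_ ?_) ?_) ?_ <;> omega
  have hP : 2 * n * (n - 2) * n.choose j *
        ((n - j) * (n - (j + 1)) * (n - (j + 2)) * (n - (j + 3))) <
      (i - 4) * (n + 1) * n.choose i *
        ((n - j) * (n - (j + 1)) * (n - (j + 2)) * (n - (j + 3))) := by
    calc 2 * n * (n - 2) * n.choose j *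
          ((n - j) * (n - (j + 1)) * (n - (j + 2)) * (n - (j + 3)))
        = 2 * n * (n - 2) *
            (n.choose j * ((n - j) * (n - (j + 1)) * (n - (j + 2)) * (n - (j + 3)))) := by
          ring
      _ = 2 * n * (n - 2) * (n.choose (j + 4) * ((j + 1) * (j + 2) * (j + 3) * (j + 4))) := by
          rw [tele]
      _ = 2 * n * (n - 2) * ((j + 1) * (j + 2) * (j + 3) * (j + 4)) * n.choose (j + 4) := by
          ring
      _ < (i - 4) * (n + 1) * ((n - j) * (n - (j + 1)) * (n - (j + 2)) * (n - (j + 3))) *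
            n.choose (j + 4) := by
          exact Nat.mul_lt_mul_of_lt_of_le hpoly (le_refl _) hcpos
      _ ≤ (i - 4) * (n + 1) * ((n - j) * (n - (j + 1)) * (n - (j + 2)) * (n - (j + 3))) *
            n.choose i := Nat.mul_le_mul (le_refl _) mono
      _ = (i - 4) * (n + 1) * n.choose i *
            ((n - j) * (n - (j + 1)) * (n - (j + 2)) * (n - (j + 3))) := by ring
  exact Nat.lt_of_mul_lt_mul_right hP

theorem stmt_17 (n i : ℕ) (ho : Odd n) (hi1 : 7 ≤ i) (hi2 : i ≤ (n - 1) / 2) :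
    ((i : ℝ) - 4) * (n.choose i : ℝ) / (n.choose (i / 2) : ℝ) >
      2 * (n : ℝ) * ((n : ℝ) - 2) / ((n : ℝ) + 1) := by
  have hn : 2 * i + 1 ≤ n := by obtain ⟨k, hk⟩ := ho; omega
  have key := nat_main_aux n i hi1 hn
  have hc : (0 : ℝ) < (n.choose (i / 2) : ℝ) := by
    exact_mod_cast Nat.choose_pos (by omega : i / 2 ≤ n)
  have hn1 : (0 : ℝ) < (n : ℝ) + 1 := by positivity
  rw [gt_iff_lt, div_lt_div_iff₀ hn1 hc]
  have hR : ((2 * n * (n - 2) * n.choose (i / 2) : ℕ) : ℝ) <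
      (((i - 4) * (n + 1) * n.choose i : ℕ) : ℝ) := by exact_mod_cast key
  push_cast [Nat.cast_sub (by omega : 2 ≤ n), Nat.cast_sub (by omega : 4 ≤ i)] at hR
  nlinarith [hR]
end
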